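/- arXiv:1705.10117 — 3 statements merged into one kernel-verified Lean document; each statement's English description precedes it below -/
import Mathlib

section
/- Let v, w be vectors in a real inner product space with ⟨v,w⟩ ≥ 0. Then |v|²|w|² − ⟨v,w⟩² ≥ (|v|²/2)·| (|w|/|v|)·v − w |² (where the right-hand side is interpreted as 0 if v = 0). -/
open scoped RealInnerProductSpace

/-!
Rescaling `v` to the length of `w` gives `‖(‖w‖/‖v‖) • v - w‖² = 2‖w‖² - 2 (‖w‖/‖v‖) ⟪v, w⟫`, so the
left-hand side equals `‖v‖²‖w‖² - ‖v‖‖w‖⟪v, w⟫`. The claim thus reduces to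
`⟪v, w⟫² ≤ ‖v‖‖w‖⟪v, w⟫`, which is Cauchy–Schwarz multiplied by `⟪v, w⟫ ≥ 0`.
-/

theorem norm_smul_norm_div_norm_sub_sq {V : Type*} [NormedAddCommGroup V] [InnerProductSpace ℝ V]
    {v : V} (hv : v ≠ 0) (w : V) :
    ‖(‖w‖ / ‖v‖) • v - w‖ ^ 2 = 2 * ‖w‖ ^ 2 - 2 * (‖w‖ / ‖v‖) * ⟪v, w⟫ := by
  have hv' : ‖v‖ ≠ 0 := norm_ne_zero_iff.mpr hv
  rw [norm_sub_sq_real, real_inner_smul_left, norm_smul, Real.norm_of_nonneg (by positivity),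
    div_mul_cancel₀ _ hv']
  ring

theorem inner_deficit_lower_bound {V : Type*} [NormedAddCommGroup V]
    [InnerProductSpace ℝ V] (v w : V) (hv : v ≠ 0) (h : 0 ≤ ⟪v, w⟫) :
    ‖v‖ ^ 2 / 2 * ‖(‖w‖ / ‖v‖) • v - w‖ ^ 2 ≤
      ‖v‖ ^ 2 * ‖w‖ ^ 2 - ⟪v, w⟫ ^ 2 := by
  have hv' : ‖v‖ ≠ 0 := norm_ne_zero_iff.mpr hv
  have cauchy_schwarz : ⟪v, w⟫ * ⟪v, w⟫ ≤ ⟪v, w⟫ * (‖v‖ * ‖w‖) :=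
    mul_le_mul_of_nonneg_left (real_inner_le_norm v w) h
  calc ‖v‖ ^ 2 / 2 * ‖(‖w‖ / ‖v‖) • v - w‖ ^ 2
      = ‖v‖ ^ 2 * ‖w‖ ^ 2 - ⟪v, w⟫ * (‖v‖ * ‖w‖) := by
        rw [norm_smul_norm_div_norm_sub_sq hv]
        field_simp
    _ ≤ ‖v‖ ^ 2 * ‖w‖ ^ 2 - ⟪v, w⟫ ^ 2 := by rw [sq]; linarith
end

section
/- Let J be a countable index set and s_j > 0 real numbers such that ∑_{j∈J} s_j^{n+1+α} = ∑_{j∈J} s_j^{n+2+α} < ∞ for every α > 0. Then s_j = 1 for every j ∈ J. -/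
theorem power_sums_force_ones {n : ℕ} {J : Type*} [Countable J]
    (s : J → ℝ) (hs : ∀ j, 0 < s j)
    (hsum : ∀ α : ℝ, 0 < α →
      Summable (fun j => s j ^ ((n : ℝ) + 1 + α)) ∧
      Summable (fun j => s j ^ ((n : ℝ) + 2 + α)) ∧
      ∑' j, s j ^ ((n : ℝ) + 1 + α) = ∑' j, s j ^ ((n : ℝ) + 2 + α)) :
    ∀ j, s j = 1 := by
  set g : ℝ → ℝ := fun α => ∑' j, s j ^ ((n : ℝ) + 1 + α) with hg
  have h1 : ∀ α : ℝ, 0 < α → g α = g (α + 1) := by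
    intro α hα
    have := (hsum α hα).2.2
    have e : (n : ℝ) + 1 + (α + 1) = (n : ℝ) + 2 + α := by ring
    rw [hg]
    simp only [e]
    exact this
  have hiter : ∀ k : ℕ, ∀ α : ℝ, 0 < α → g α = g (α + k) := by
    intro k
    induction k with
    | zero => intro α hα; simp
    | succ m ih =>
      intro α hα
      have e : α + ((m : ℝ) + 1) = (α + 1) + m := by ring
      have := ih (α + 1) (by linarith)
      push_cast
      rw [e, ← this, h1 α hα]
  -- Step 1: all s j ≤ 1
  have hle : ∀ j, s j ≤ 1 := by
    intro j0
    by_contra hgt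
    push_neg at hgt
    obtain ⟨k, hk⟩ := pow_unbounded_of_one_lt (g 1) hgt
    have hsummable := (hsum (1 + k) (by positivity)).1
    have hterm : s j0 ^ ((n : ℝ) + 1 + (1 + k)) ≤ g (1 + k) :=
      Summable.le_tsum hsummable j0 (fun j _ => Real.rpow_nonneg (hs j).le _)
    have hlow : (s j0) ^ k ≤ s j0 ^ ((n : ℝ) + 1 + (1 + k)) := by
      rw [← Real.rpow_natCast (s j0) k]
      apply Real.rpow_le_rpow_of_exponent_le hgt.le
      have : (0:ℝ) ≤ (n : ℝ) := Nat.cast_nonneg n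
      linarith
    have : g (1 + k) = g 1 := (hiter k 1 one_pos).symm ▸ rfl
    have := hiter k 1 one_pos
    rw [show (1:ℝ) + k = 1 + (k:ℝ) from rfl] at hterm
    rw [← this] at hterm
    linarith
  -- Step 2: each s j = 1
  intro j0
  by_contra hne
  have hlt : s j0 < 1 := lt_of_le_of_ne (hle j0) hne
  have h := hsum 1 one_pos
  have hstrict : ∑' j, s j ^ ((n : ℝ) + 2 + 1) < ∑' j, s j ^ ((n : ℝ) + 1 + 1) := by
    apply Summable.tsum_lt_tsum (i := j0)
    · intro j
      apply Real.rpow_le_rpow_of_exponent_ge (hs j) (hle j)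
      linarith
    · exact Real.rpow_lt_rpow_of_exponent_gt (hs j0) hlt (by linarith)
    · exact h.2.1
    · exact h.1
  rw [h.2.2] at hstrict
  exact lt_irrefl _ hstrict
end

section
/- Let F be a smooth elliptic integrand, Ω a bounded open set with smooth boundary satisfying H_Ω^F ≥ κ H_Ω^{F,0} on ∂Ω for some κ > 0, where H_Ω^{F,0} = n 𝓕(Ω)/((n+1)|Ω|). Then the anisotropic Heintze–Karcher deficit η_F(Ω) = 1 − (n+1)|Ω| / ∫_{∂Ω} (n F(ν_Ω)/H_Ω^F) satisfies η_F(Ω) ≤ (1/(κ 𝓕(Ω))) ∫_{∂Ω} |H_Ω^F/H_Ω^{F,0} − 1| F(ν_Ω) dH^n, and in particular η_F(Ω) ≤ δ_F(Ω)/κ, where δ_F(Ω) = ( (1/𝓕(Ω)) ∫_{∂Ω} |H_Ω^F/H_Ω^{F,0} − 1|² F(ν_Ω) dH^n )^{1/2}. -/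
open scoped RealInnerProductSpace MeasureTheory
open MeasureTheory

abbrev Euc (n : ℕ) := EuclideanSpace ℝ (Fin (n + 1))

/-- The `n`-dimensional Hausdorff measure restricted to the boundary of `Ω`. -/
noncomputable def bdryMeasure (n : ℕ) (Ω : Set (Euc n)) : Measure (Euc n) :=
  (Measure.hausdorffMeasure (n : ℝ)).restrict (frontier Ω)

/-! With `t = H / H₀ ≥ κ` one has `1 / t ≤ 1 + |t - 1| / κ`. Integrating this against
`n F(ν) / H₀ = (n + 1)|Ω| F(ν) / 𝓕(Ω)` bounds the Heintze–Karcher integral by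
`(n + 1)|Ω| (1 + ε)`, where `ε` is the first right-hand side, and the Heintze–Karcher
inequality then squeezes the deficit below `ε`. The second bound is Cauchy–Schwarz for
the measure `F(ν) dHⁿ` on `∂Ω`. -/

open Real

section

variable {α : Type*} [MeasurableSpace α] {μ : Measure α}

lemma inv_le_one_add_abs_sub_one_div {t κ : ℝ} (hκ : 0 < κ) (ht : κ ≤ t) :
    t⁻¹ ≤ 1 + |t - 1| / κ := by
  have ht0 : 0 < t := hκ.trans_le ht
  calc t⁻¹ = 1 + (1 - t) / t := by field_simp; ring
    _ ≤ 1 + |t - 1| / t := by gcongr; rw [abs_sub_comm]; exact le_abs_self _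
    _ ≤ 1 + |t - 1| / κ := by gcongr

lemma integral_div_le_of_mul_le {w h : α → ℝ} {c κ : ℝ} (hc : 0 < c) (hκ : 0 < κ)
    (hw : 0 ≤ᵐ[μ] w) (hh : ∀ᵐ x ∂μ, κ * c ≤ h x) (hwi : Integrable w μ)
    (hdi : Integrable (fun x => |h x / c - 1| * w x) μ) :
    ∫ x, w x / h x ∂μ ≤ (∫ x, w x ∂μ + (∫ x, |h x / c - 1| * w x ∂μ) / κ) / c := by
  have hbound : ∀ᵐ x ∂μ, w x / h x ≤ (w x + |h x / c - 1| * w x / κ) / c := by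
    filter_upwards [hw, hh] with x hwx hhx
    have hinv := inv_le_one_add_abs_sub_one_div hκ ((le_div_iff₀ hc).2 hhx)
    calc w x / h x = w x * (h x / c)⁻¹ / c := by
          field_simp [(mul_pos hκ hc).trans_le hhx |>.ne']
      _ ≤ w x * (1 + |h x / c - 1| / κ) / c := by gcongr
      _ = (w x + |h x / c - 1| * w x / κ) / c := by ring
  have hnonneg : 0 ≤ᵐ[μ] fun x => w x / h x := by
    filter_upwards [hw, hh] with x hwx hhx
    exact div_nonneg hwx ((mul_pos hκ hc).le.trans hhx)
  have hbi : Integrable (fun x => (w x + |h x / c - 1| * w x / κ) / c) μ :=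
    (hwi.add (hdi.div_const κ)).div_const c
  refine (integral_mono_of_nonneg hnonneg hbi hbound).trans_eq ?_
  rw [integral_div, integral_add hwi (hdi.div_const κ), integral_div]

lemma integral_abs_mul_le_sqrt_mul_sqrt {g w : α → ℝ} (hw : 0 ≤ᵐ[μ] w)
    (hwi : Integrable w μ) (hgw : AEStronglyMeasurable (fun x => |g x| * w x) μ)
    (hg2w : Integrable (fun x => |g x| ^ 2 * w x) μ) :
    ∫ x, |g x| * w x ∂μ ≤ √(∫ x, |g x| ^ 2 * w x ∂μ) * √(∫ x, w x ∂μ) := by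
  -- `|g| * w / √w` equals `|g| * √w` everywhere, but is visibly measurable
  set f : α → ℝ := fun x => |g x| * w x / √(w x)
  have hf : ∀ x, f x = |g x| * √(w x) := fun x => by simp only [f, mul_div_assoc, div_sqrt]
  have hsm : AEStronglyMeasurable (fun x => √(w x)) μ :=
    continuous_sqrt.comp_aestronglyMeasurable hwi.1
  have hfm : AEStronglyMeasurable f μ :=
    (hgw.aemeasurable.div hsm.aemeasurable).aestronglyMeasurable
  have hf2 : ∀ᵐ x ∂μ, f x ^ 2 = |g x| ^ 2 * w x := by
    filter_upwards [hw] with x hwx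
    rw [hf, mul_pow, sq_sqrt hwx]
  have hs2 : ∀ᵐ x ∂μ, √(w x) ^ 2 = w x := by
    filter_upwards [hw] with x hwx
    exact sq_sqrt hwx
  have hfs : ∀ᵐ x ∂μ, f x * √(w x) = |g x| * w x := by
    filter_upwards [hw] with x hwx
    rw [hf, mul_assoc, mul_self_sqrt hwx]
  have hfL2 : MemLp f (ENNReal.ofReal 2) μ := by
    rw [ENNReal.ofReal_ofNat, memLp_two_iff_integrable_sq hfm]
    exact hg2w.congr (hf2.mono fun x hx => hx.symm)
  have hsL2 : MemLp (fun x => √(w x)) (ENNReal.ofReal 2) μ := by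
    rw [ENNReal.ofReal_ofNat, memLp_two_iff_integrable_sq hsm]
    exact hwi.congr (hs2.mono fun x hx => hx.symm)
  have holder := integral_mul_le_Lp_mul_Lq_of_nonneg HolderConjugate.two_two
    (ae_of_all μ fun x => by rw [hf]; positivity) (ae_of_all μ fun _ => sqrt_nonneg _) hfL2 hsL2
  simp only [rpow_two, ← sqrt_eq_rpow] at holder
  rwa [integral_congr_ae hfs, integral_congr_ae hf2, integral_congr_ae hs2] at holder

end

lemma one_sub_div_le_of_le_mul_one_add {V I ε : ℝ} (hV : 0 < V) (hVI : V ≤ I)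
    (hIV : I ≤ V * (1 + ε)) : 1 - V / I ≤ ε := by
  have hI : 0 < I := hV.trans_le hVI
  rw [one_sub_div hI.ne', div_le_iff₀ hI]
  nlinarith

lemma one_div_mul_le_sqrt_div {J K F κ : ℝ} (hκ : 0 < κ) (hF : 0 < F)
    (hJ : J ≤ √K * √F) : 1 / (κ * F) * J ≤ √(1 / F * K) / κ := by
  have hsF : 0 < √F := sqrt_pos.2 hF
  calc 1 / (κ * F) * J ≤ 1 / (κ * F) * (√K * √F) := by gcongr
    _ = √K / √F / κ := by field_simp; rw [sq_sqrt hF.le]; ring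
    _ = √(1 / F * K) / κ := by rw [sqrt_mul (by positivity), one_div, sqrt_inv, inv_mul_eq_div]

theorem heintze_karcher_deficit_le_general {n : ℕ}
    (Ω : Set (Euc n))
    -- `Fν x` plays the role of `F(ν_Ω(x))` and `H x` of `H_Ω^F(x)` on `∂Ω`
    (Fν H : Euc n → ℝ)
    (hFpos : ∀ x ∈ frontier Ω, 0 < Fν x)
    (hvol : 0 < (volume Ω).toReal)
    (hF : 0 < ∫ x, Fν x ∂(bdryMeasure n Ω))
    (κ : ℝ) (hκ : 0 < κ)
    -- lower bound `H_Ω^F ≥ κ H_Ω^{F,0}` on `∂Ω`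
    (hκH : ∀ x ∈ frontier Ω,
      κ * ((n : ℝ) * (∫ y, Fν y ∂(bdryMeasure n Ω)) /
        (((n : ℝ) + 1) * (volume Ω).toReal)) ≤ H x)
    -- integrability of the relevant boundary integrands
    (hi3 : Integrable (fun x =>
      |H x / ((n : ℝ) * (∫ y, Fν y ∂(bdryMeasure n Ω)) /
        (((n : ℝ) + 1) * (volume Ω).toReal)) - 1| * Fν x) (bdryMeasure n Ω))
    (hi4 : Integrable (fun x =>
      |H x / ((n : ℝ) * (∫ y, Fν y ∂(bdryMeasure n Ω)) /
        (((n : ℝ) + 1) * (volume Ω).toReal)) - 1| ^ 2 * Fν x) (bdryMeasure n Ω))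
    -- the anisotropic Heintze–Karcher inequality
    (hHK : ((n : ℝ) + 1) * (volume Ω).toReal ≤
      ∫ x, (n : ℝ) * Fν x / H x ∂(bdryMeasure n Ω)) :
    1 - ((n : ℝ) + 1) * (volume Ω).toReal /
        (∫ x, (n : ℝ) * Fν x / H x ∂(bdryMeasure n Ω)) ≤
      (1 / (κ * ∫ x, Fν x ∂(bdryMeasure n Ω))) *
        ∫ x, |H x / ((n : ℝ) * (∫ y, Fν y ∂(bdryMeasure n Ω)) /
          (((n : ℝ) + 1) * (volume Ω).toReal)) - 1| * Fν x ∂(bdryMeasure n Ω) ∧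
    1 - ((n : ℝ) + 1) * (volume Ω).toReal /
        (∫ x, (n : ℝ) * Fν x / H x ∂(bdryMeasure n Ω)) ≤
      Real.sqrt ((1 / ∫ x, Fν x ∂(bdryMeasure n Ω)) *
        ∫ x, |H x / ((n : ℝ) * (∫ y, Fν y ∂(bdryMeasure n Ω)) /
          (((n : ℝ) + 1) * (volume Ω).toReal)) - 1| ^ 2 * Fν x
          ∂(bdryMeasure n Ω)) / κ := by
  set μ := bdryMeasure n Ω
  set Fint := ∫ x, Fν x ∂μ
  set V := ((n : ℝ) + 1) * (volume Ω).toReal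
  set H0 := (n : ℝ) * Fint / V
  have hV : 0 < V := by positivity
  have hn : (0 : ℝ) < n := by
    rcases n.eq_zero_or_pos with rfl | hn
    · simp only [Nat.cast_zero, zero_mul, zero_div, integral_zero] at hHK; linarith
    · exact_mod_cast hn
  have hH0 : 0 < H0 := by positivity
  have hbdry : ∀ᵐ x ∂μ, x ∈ frontier Ω := ae_restrict_mem isClosed_frontier.measurableSet
  have hFν : 0 ≤ᵐ[μ] Fν := hbdry.mono fun x hx => (hFpos x hx).le
  have hFi : Integrable Fν μ := .of_integral_ne_zero hF.ne'
  set J := ∫ x, |H x / H0 - 1| * Fν x ∂μ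
  have hIV : ∫ x, (n : ℝ) * Fν x / H x ∂μ ≤ V * (1 + 1 / (κ * Fint) * J) := calc
    ∫ x, (n : ℝ) * Fν x / H x ∂μ = n * ∫ x, Fν x / H x ∂μ := by
      simp only [mul_div_assoc, integral_const_mul]
    _ ≤ n * ((Fint + J / κ) / H0) := by
      gcongr
      exact integral_div_le_of_mul_le hH0 hκ hFν (hbdry.mono hκH) hFi hi3
    _ = V * (1 + 1 / (κ * Fint) * J) := by
      simp only [H0]; field_simp
  have hdeficit := one_sub_div_le_of_le_mul_one_add hV hHK hIV
  exact ⟨hdeficit, hdeficit.trans <| one_div_mul_le_sqrt_div hκ hF <|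
    integral_abs_mul_le_sqrt_mul_sqrt hFν hFi hi3.1 hi4⟩

theorem heintze_karcher_deficit_le {n : ℕ}
    (Ω : Set (Euc n)) (hΩo : IsOpen Ω) (hΩb : Bornology.IsBounded Ω)
    -- `Fν x` plays the role of `F(ν_Ω(x))` and `H x` of `H_Ω^F(x)` on `∂Ω`
    (Fν H : Euc n → ℝ)
    (hFpos : ∀ x ∈ frontier Ω, 0 < Fν x)
    (hHpos : ∀ x ∈ frontier Ω, 0 < H x)
    (hvol : 0 < (volume Ω).toReal)
    (hF : 0 < ∫ x, Fν x ∂(bdryMeasure n Ω))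
    (κ : ℝ) (hκ : 0 < κ)
    -- lower bound `H_Ω^F ≥ κ H_Ω^{F,0}` on `∂Ω`
    (hκH : ∀ x ∈ frontier Ω,
      κ * ((n : ℝ) * (∫ y, Fν y ∂(bdryMeasure n Ω)) /
        (((n : ℝ) + 1) * (volume Ω).toReal)) ≤ H x)
    -- integrability of the relevant boundary integrands
    (hi1 : Integrable (fun x => (n : ℝ) * Fν x / H x) (bdryMeasure n Ω))
    (hi2 : Integrable Fν (bdryMeasure n Ω))
    (hi3 : Integrable (fun x =>
      |H x / ((n : ℝ) * (∫ y, Fν y ∂(bdryMeasure n Ω)) /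
        (((n : ℝ) + 1) * (volume Ω).toReal)) - 1| * Fν x) (bdryMeasure n Ω))
    (hi4 : Integrable (fun x =>
      |H x / ((n : ℝ) * (∫ y, Fν y ∂(bdryMeasure n Ω)) /
        (((n : ℝ) + 1) * (volume Ω).toReal)) - 1| ^ 2 * Fν x) (bdryMeasure n Ω))
    -- the anisotropic Heintze–Karcher inequality
    (hHK : ((n : ℝ) + 1) * (volume Ω).toReal ≤
      ∫ x, (n : ℝ) * Fν x / H x ∂(bdryMeasure n Ω)) :
    1 - ((n : ℝ) + 1) * (volume Ω).toReal /
        (∫ x, (n : ℝ) * Fν x / H x ∂(bdryMeasure n Ω)) ≤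
      (1 / (κ * ∫ x, Fν x ∂(bdryMeasure n Ω))) *
        ∫ x, |H x / ((n : ℝ) * (∫ y, Fν y ∂(bdryMeasure n Ω)) /
          (((n : ℝ) + 1) * (volume Ω).toReal)) - 1| * Fν x ∂(bdryMeasure n Ω) ∧
    1 - ((n : ℝ) + 1) * (volume Ω).toReal /
        (∫ x, (n : ℝ) * Fν x / H x ∂(bdryMeasure n Ω)) ≤
      Real.sqrt ((1 / ∫ x, Fν x ∂(bdryMeasure n Ω)) *
        ∫ x, |H x / ((n : ℝ) * (∫ y, Fν y ∂(bdryMeasure n Ω)) /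
          (((n : ℝ) + 1) * (volume Ω).toReal)) - 1| ^ 2 * Fν x
          ∂(bdryMeasure n Ω)) / κ :=
  heintze_karcher_deficit_le_general Ω Fν H hFpos hvol hF κ hκ hκH hi3 hi4 hHK
end
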